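/- arXiv:1711.11497 — 7 statements merged into one kernel-verified Lean document; each statement's English description precedes it below -/
import Mathlib

section
/- If p is a real-rooted polynomial of degree n with distinct consecutive roots z_j < z_{j+1}, then every root z' of p' lying in the open interval (z_j, z_{j+1}) satisfies z_j + (z_{j+1} - z_j)/n ≤ z' ≤ z_j + (1 - 1/n)(z_{j+1} - z_j). -/
open Polynomial

/-!
At a critical point `x` of a real-rooted `p` that is not itself a root, the logarithmic
derivative vanishes: `∑ 1 / (x - r) = 0` over the roots `r` of `p`. If `x` lies in the gap
`(a, b)` between consecutive roots, the term of `a` equals `1 / (x - a)`, while each of the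
other `n - 1` terms is at least `-1 / (b - x)`. Hence `b - x ≤ (n - 1) (x - a)`, which is the
lower bound; the upper bound follows by reflecting the roots, `r ↦ -r`.
-/

namespace Multiset

variable {R : Multiset ℝ} {a b x : ℝ}

theorem sub_le_card_mul_of_sum_one_div_eq_zero (ha : a ∈ R)
    (hgap : ∀ r ∈ R, r ∉ Set.Ioo a b) (hax : a < x) (hxb : x < b)
    (hsum : (R.map fun r ↦ 1 / (x - r)).sum = 0) :
    b - a ≤ card R * (x - a) := by
  have hterm : ∀ y ∈ (R.erase a).map fun r ↦ 1 / (x - r), -1 / (b - x) ≤ y := by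
    simp only [mem_map]
    rintro _ ⟨r, hr, rfl⟩
    rcases le_or_gt r a with hra | har
    · have : 0 < 1 / (x - r) := one_div_pos.mpr (by linarith)
      have : -1 / (b - x) < 0 := div_neg_of_neg_of_pos (by norm_num) (by linarith)
      linarith
    · have hbr : b ≤ r := not_lt.mp fun hrb ↦ hgap r (mem_of_mem_erase hr) ⟨har, hrb⟩
      rw [neg_div, ← neg_sub r x, div_neg]
      exact neg_le_neg (one_div_le_one_div_of_le (by linarith) (by linarith))
  have hsum_erase : 1 / (x - a) + ((R.erase a).map fun r ↦ 1 / (x - r)).sum = 0 := by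
    rw [sum_map_erase (f := fun r ↦ 1 / (x - r)) ha, hsum]
  have hbound := card_nsmul_le_sum hterm
  rw [card_map, nsmul_eq_mul, mul_div_assoc', mul_neg_one, neg_div] at hbound
  have hkey : 1 / (x - a) ≤ (card (R.erase a) : ℝ) / (b - x) := by linarith
  rw [div_le_div_iff₀ (by linarith) (by linarith)] at hkey
  rw [← card_erase_add_one ha]
  push_cast
  linarith

theorem card_mul_sub_le_of_sum_one_div_eq_zero (hb : b ∈ R)
    (hgap : ∀ r ∈ R, r ∉ Set.Ioo a b) (hax : a < x) (hxb : x < b)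
    (hsum : (R.map fun r ↦ 1 / (x - r)).sum = 0) :
    b - a ≤ card R * (b - x) := by
  have hneg := sub_le_card_mul_of_sum_one_div_eq_zero (R := R.map Neg.neg) (b := -a) (x := -x)
    (mem_map_of_mem _ hb)
    (by
      simp only [mem_map, Set.mem_Ioo]
      rintro _ ⟨r, hr, rfl⟩ ⟨h₁, h₂⟩
      exact hgap r hr ⟨by linarith, by linarith⟩)
    (by linarith) (by linarith)
    (by
      have : ∀ r, 1 / (-x - -r) = -(1 / (x - r)) := fun r ↦ by
        rw [neg_sub_neg, ← neg_sub x r, div_neg]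
      simp only [map_map, Function.comp_def, this, sum_map_neg, hsum, neg_zero])
  rw [card_map] at hneg
  linarith

end Multiset

theorem Polynomial.Splits.sum_one_div_sub_roots_eq_zero {p : ℝ[X]} (hp : p.Splits) {x : ℝ}
    (hx : ¬p.IsRoot x) (hx' : p.derivative.IsRoot x) :
    (p.roots.map fun r ↦ 1 / (x - r)).sum = 0 := by
  have := hp.eval_derivative_eq_eval_mul_sum hx
  rw [hx'.eq_zero, eq_comm, mul_eq_zero] at this
  exact this.resolve_left hx

theorem quantitative_interlacing_general (n : ℕ) (p : Polynomial ℝ)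
    (hdeg : p.natDegree = n) (hsplit : p.Splits)
    (zj zj1 : ℝ)
    (hrj : p.IsRoot zj) (hrj1 : p.IsRoot zj1)
    (hconsec : ∀ x : ℝ, zj < x → x < zj1 → ¬ p.IsRoot x)
    (z' : ℝ) (hz'1 : zj < z') (hz'2 : z' < zj1) (hz' : p.derivative.IsRoot z') :
    zj + (zj1 - zj) / n ≤ z' ∧ z' ≤ zj + (1 - 1 / n) * (zj1 - zj) := by
  have hp : p ≠ 0 := fun h ↦ hconsec z' hz'1 hz'2 (by simp [h])
  have hcard : Multiset.card p.roots = n := by rw [← hdeg, splits_iff_card_roots.mp hsplit]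
  have hgap : ∀ r ∈ p.roots, r ∉ Set.Ioo zj zj1 :=
    fun r hr hr' ↦ hconsec r hr'.1 hr'.2 (isRoot_of_mem_roots hr)
  have hsum := hsplit.sum_one_div_sub_roots_eq_zero (hconsec z' hz'1 hz'2) hz'
  have hlower := Multiset.sub_le_card_mul_of_sum_one_div_eq_zero
    ((mem_roots hp).mpr hrj) hgap hz'1 hz'2 hsum
  have hupper := Multiset.card_mul_sub_le_of_sum_one_div_eq_zero
    ((mem_roots hp).mpr hrj1) hgap hz'1 hz'2 hsum
  rw [hcard] at hlower hupper
  have hn : (0 : ℝ) < n := by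
    rw [← hcard]
    exact_mod_cast Multiset.card_pos_iff_exists_mem.mpr ⟨zj, (mem_roots hp).mpr hrj⟩
  constructor
  · linarith [(div_le_iff₀' hn).mpr hlower]
  · have : (1 - 1 / (n : ℝ)) * (zj1 - zj) = (zj1 - zj) - (zj1 - zj) / n := by ring
    linarith [(div_le_iff₀' hn).mpr hupper]

/-- **Quantitative interlacing.** If `p` is a real-rooted polynomial of degree `n ≥ 2`
with consecutive distinct roots `zj < zj1`, then every root `z'` of `p'` in the open
interval `(zj, zj1)` satisfies
`zj + (zj1 - zj)/n ≤ z' ≤ zj + (1 - 1/n) * (zj1 - zj)`. -/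
theorem quantitative_interlacing (n : ℕ) (hn : 2 ≤ n) (p : Polynomial ℝ)
    (hdeg : p.natDegree = n) (hsplit : p.Splits)
    (zj zj1 : ℝ) (hlt : zj < zj1)
    (hrj : p.IsRoot zj) (hrj1 : p.IsRoot zj1)
    (hconsec : ∀ x : ℝ, zj < x → x < zj1 → ¬ p.IsRoot x)
    (z' : ℝ) (hz'1 : zj < z') (hz'2 : z' < zj1) (hz' : p.derivative.IsRoot z') :
    zj + (zj1 - zj) / n ≤ z' ∧ z' ≤ zj + (1 - 1 / n) * (zj1 - zj) :=
  quantitative_interlacing_general n p hdeg hsplit zj zj1 hrj hrj1 hconsec z' hz'1 hz'2 hz'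
end

section
/- There exists a set 𝓜_d of d-matchings on [n] with |𝓜_d| ≥ C(n,d)/(4·2^d) and a set 𝓢_d of d-subsets of [n] such that every S ∈ 𝓢_d is fully crossed by a unique matching in 𝓜_d, and every M ∈ 𝓜_d fully crosses at least one S ∈ 𝓢_d. -/
open Finset

/-- A `d`-matching on `[n]`: `d` edges `(i,j)` with `i < j`, pairwise vertex-disjoint. -/
def IsMatching (n d : ℕ) (M : Finset (Fin n × Fin n)) : Prop :=
  M.card = d ∧ (∀ e ∈ M, e.1 < e.2) ∧
    ∀ e ∈ M, ∀ f ∈ M, e ≠ f → e.1 ≠ f.1 ∧ e.1 ≠ f.2 ∧ e.2 ≠ f.1 ∧ e.2 ≠ f.2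

/-- `M` fully crosses `S` if every edge of `M` has exactly one endpoint in `S`. -/
def FullyCrosses (n : ℕ) (M : Finset (Fin n × Fin n)) (S : Finset (Fin n)) : Prop :=
  ∀ e ∈ M, (e.1 ∈ S ∧ e.2 ∉ S) ∨ (e.1 ∉ S ∧ e.2 ∈ S)

/-!
Let `U` be the set of all `d`-matchings and `E = (n - d)! / (n - 2d)!` the number of them that
fully cross a fixed `d`-set `S` (they correspond to the injections `S ↪ Sᶜ`). Join `M` to `M'`
when `M'` fully crosses the set of left endpoints of `M`; every `M` has out-degree `E`. Instead
of sampling and deleting at random, remove greedily a matching of small in-degree together with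
its neighbours: this yields a set `I` of at least `|U| / (2E + 1)` matchings with no joins inside
it, so every `M ∈ I` is the only member of `I` crossing its own set of left endpoints. Double
counting the pairs (`S`, `M`) with `M` crossing `S`, where a matching crosses at most `2^d` of the
`d`-sets, gives `C(n, d) · E ≤ 2^d · |U|`.
-/

theorem Finset.exists_independent_subset_of_card_filter_le {α : Type*} [DecidableEq α]
    (r : α → α → Prop) [DecidableRel r] (k : ℕ) (U : Finset α)
    (hU : ∀ x ∈ U, #{y ∈ U | r x y} ≤ k) :
    ∃ I ⊆ U, #U ≤ (2 * k + 1) * #I ∧ ∀ x ∈ I, ∀ y ∈ I, r x y → x = y := by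
  induction U using Finset.strongInduction with
  | H U ih =>
  obtain rfl | hne := U.eq_empty_or_nonempty
  · exact ⟨∅, empty_subset _, by simp, by simp⟩
  -- the in-degrees have the same sum as the out-degrees, so some in-degree is at most `k`
  obtain ⟨v, hvU, hv⟩ : ∃ v ∈ U, #{y ∈ U | r y v} ≤ k := by
    refine exists_le_of_sum_le hne ?_
    calc ∑ x ∈ U, #{y ∈ U | r y x} = ∑ y ∈ U, #{x ∈ U | r y x} := by
          simp only [card_filter]; exact sum_comm
      _ ≤ ∑ _ ∈ U, k := sum_le_sum hU
  set N := insert v ({y ∈ U | r v y} ∪ {y ∈ U | r y v})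
  have hNU : N ⊆ U := insert_subset hvU (union_subset (filter_subset _ _) (filter_subset _ _))
  have hN : #N ≤ 2 * k + 1 :=
    calc #N ≤ #{y ∈ U | r v y} + #{y ∈ U | r y v} + 1 :=
          (card_insert_le _ _).trans (by gcongr; exact card_union_le _ _)
      _ ≤ 2 * k + 1 := by have := hU v hvU; omega
  obtain ⟨I, hIU, hIcard, hIfree⟩ := ih (U \ N) (sdiff_ssubset hNU ⟨v, mem_insert_self _ _⟩)
    fun x hx => (card_le_card (filter_subset_filter _ sdiff_subset)).trans
      (hU x (mem_sdiff.1 hx).1)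
  have hvI : v ∉ I := fun h => (mem_sdiff.1 (hIU h)).2 (mem_insert_self _ _)
  refine ⟨insert v I, insert_subset hvU (hIU.trans sdiff_subset), ?_, ?_⟩
  · rw [card_insert_of_notMem hvI]
    have := card_le_card_sdiff_add_card (s := U) (t := N)
    have := card_le_card hIU
    nlinarith
  · have hfar : ∀ y ∈ I, ¬ r v y ∧ ¬ r y v := fun y hy => by
      have := (mem_sdiff.1 (hIU hy))
      simp_all [N]
    rintro x hx y hy hxy
    rcases mem_insert.1 hx with hx | hx <;> rcases mem_insert.1 hy with hy | hy
    · rw [hx, hy]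
    · exact ((hfar y hy).1 (hx ▸ hxy)).elim
    · exact ((hfar x hx).2 (hy ▸ hxy)).elim
    · exact hIfree x hx y hy hxy

instance (n d : ℕ) : DecidablePred (IsMatching n d) := fun _ => by
  unfold IsMatching; infer_instance

instance (n : ℕ) (M : Finset (Fin n × Fin n)) : DecidablePred (FullyCrosses n M) := fun _ => by
  unfold FullyCrosses; infer_instance

variable {n d : ℕ} {M : Finset (Fin n × Fin n)} {S : Finset (Fin n)}

namespace IsMatching

theorem injOn_of_eq_fst_or_eq_snd (hM : IsMatching n d M) {g : Fin n × Fin n → Fin n}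
    (hg : ∀ e, g e = e.1 ∨ g e = e.2) : Set.InjOn g M := by
  intro e he f hf hef
  by_contra hne
  obtain ⟨h11, h12, h21, h22⟩ := hM.2.2 e he f hf hne
  rcases hg e with h | h <;> rcases hg f with h' | h' <;> rw [h, h'] at hef <;> contradiction

end IsMatching

def leftEnds (M : Finset (Fin n × Fin n)) : Finset (Fin n) := M.image Prod.fst

theorem IsMatching.card_leftEnds (hM : IsMatching n d M) : #(leftEnds M) = d := by
  rw [leftEnds, card_image_of_injOn (hM.injOn_of_eq_fst_or_eq_snd fun _ => Or.inl rfl), hM.1]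

theorem IsMatching.fullyCrosses_leftEnds (hM : IsMatching n d M) :
    FullyCrosses n M (leftEnds M) := by
  intro e he
  refine Or.inl ⟨mem_image_of_mem _ he, fun h => ?_⟩
  obtain ⟨f, hf, hfe⟩ := mem_image.1 h
  rcases eq_or_ne f e with rfl | hne
  · exact (hM.2.1 f hf).ne hfe
  · exact (hM.2.2 f hf e he hne).2.1 hfe

def endIn (S : Finset (Fin n)) (e : Fin n × Fin n) : Fin n := if e.1 ∈ S then e.1 else e.2

def endOut (S : Finset (Fin n)) (e : Fin n × Fin n) : Fin n := if e.1 ∈ S then e.2 else e.1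

theorem IsMatching.image_endIn (hM : IsMatching n d M) (hX : FullyCrosses n M S)
    (hS : #S = d) : M.image (endIn S) = S := by
  refine eq_of_subset_of_card_le (fun x hx => ?_) ?_
  · obtain ⟨e, he, rfl⟩ := mem_image.1 hx
    unfold endIn
    rcases hX e he with ⟨h1, -⟩ | ⟨h1, h2⟩ <;> simp [*]
  · have hinj : Set.InjOn (endIn S) M :=
      hM.injOn_of_eq_fst_or_eq_snd fun e => by unfold endIn; split_ifs <;> simp
    rw [card_image_of_injOn hinj, hM.1, hS]

-- A fully crossed `d`-set is determined by which endpoint of each edge it contains.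
theorem IsMatching.card_filter_fullyCrosses_le (hM : IsMatching n d M) :
    #{S ∈ powersetCard d univ | FullyCrosses n M S} ≤ 2 ^ d := by
  calc _ ≤ #(M.powerset.image fun T => M.image fun e => if e ∈ T then e.1 else e.2) := by
        refine card_le_card fun S hS => ?_
        rw [mem_filter, mem_powersetCard_univ] at hS
        refine mem_image.2 ⟨{e ∈ M | e.1 ∈ S}, mem_powerset.2 (filter_subset _ _), ?_⟩
        refine (image_congr fun e he => ?_).trans (hM.image_endIn hS.2 hS.1)
        simp only [mem_filter, mem_coe.1 he, true_and, endIn]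
    _ ≤ #M.powerset := card_image_le
    _ = 2 ^ d := by rw [card_powerset, hM.1]

def sortedPair (a b : Fin n) : Fin n × Fin n := if a < b then (a, b) else (b, a)

theorem sortedPair_eq_or (a b : Fin n) : sortedPair a b = (a, b) ∨ sortedPair a b = (b, a) := by
  unfold sortedPair; split_ifs <;> simp

theorem sortedPair_endIn_endOut {e : Fin n × Fin n} (he : e.1 < e.2) :
    sortedPair (endIn S e) (endOut S e) = e := by
  unfold sortedPair endIn endOut
  split_ifs <;> first | rfl | simp_all [lt_asymm he]

theorem sortedPair_fst_lt_snd {a b : Fin n} (hab : a ≠ b) :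
    (sortedPair a b).1 < (sortedPair a b).2 := by
  unfold sortedPair
  split_ifs with h
  · exact h
  · exact lt_of_le_of_ne (not_lt.1 h) hab.symm

theorem endIn_sortedPair {a b : Fin n} (ha : a ∈ S) (hb : b ∉ S) :
    endIn S (sortedPair a b) = a := by
  rcases sortedPair_eq_or a b with h | h <;> simp [h, endIn, ha, hb]

theorem endOut_sortedPair {a b : Fin n} (ha : a ∈ S) (hb : b ∉ S) :
    endOut S (sortedPair a b) = b := by
  rcases sortedPair_eq_or a b with h | h <;> simp [h, endOut, ha, hb]

def matchingOfEmb (S : Finset (Fin n)) (f : S ↪ {x // x ∉ S}) : Finset (Fin n × Fin n) :=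
  S.attach.image fun s => sortedPair s.1 (f s).1

theorem mem_matchingOfEmb {f : S ↪ {x // x ∉ S}} {e : Fin n × Fin n} :
    e ∈ matchingOfEmb S f ↔ ∃ s : S, sortedPair s (f s) = e := by
  simp [matchingOfEmb]

theorem fullyCrosses_matchingOfEmb (f : S ↪ {x // x ∉ S}) :
    FullyCrosses n (matchingOfEmb S f) S := by
  intro e he
  obtain ⟨s, rfl⟩ := mem_matchingOfEmb.1 he
  rcases sortedPair_eq_or s.1 (f s).1 with h | h <;> rw [h]
  · exact Or.inl ⟨s.2, (f s).2⟩
  · exact Or.inr ⟨(f s).2, s.2⟩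

theorem matchingOfEmb_injective : Function.Injective (matchingOfEmb S) := by
  intro f g hfg
  ext s : 2
  have hs : sortedPair s.1 (f s).1 ∈ matchingOfEmb S g := hfg ▸ mem_matchingOfEmb.2 ⟨s, rfl⟩
  obtain ⟨t, hts⟩ := mem_matchingOfEmb.1 hs
  have hst : s = t := Subtype.ext <| by
    simpa [endIn_sortedPair, s.2, t.2, (f s).2, (g t).2] using congrArg (endIn S) hts.symm
  subst hst
  simpa [endOut_sortedPair, s.2, (f s).2, (g s).2] using congrArg (endOut S) hts.symm

theorem isMatching_matchingOfEmb (hS : #S = d) (f : S ↪ {x // x ∉ S}) :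
    IsMatching n d (matchingOfEmb S f) := by
  have hne : ∀ s : S, s.1 ≠ (f s).1 := fun s h => (f s).2 (h ▸ s.2)
  have hinj : Set.InjOn (fun s : S => sortedPair s.1 (f s).1) S.attach := fun s _ t _ h => by
    simpa [endIn_sortedPair, s.2, t.2, (f s).2, (f t).2] using congrArg (endIn S) h
  refine ⟨by rw [matchingOfEmb, card_image_of_injOn hinj, card_attach, hS], ?_, ?_⟩
  · intro e he
    obtain ⟨s, rfl⟩ := mem_matchingOfEmb.1 he
    exact sortedPair_fst_lt_snd (hne s)
  · intro e he e' he' hee'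
    obtain ⟨s, rfl⟩ := mem_matchingOfEmb.1 he
    obtain ⟨t, rfl⟩ := mem_matchingOfEmb.1 he'
    have hst : s ≠ t := by rintro rfl; exact hee' rfl
    have h1 : s.1 ≠ t.1 := fun h => hst (Subtype.ext h)
    have h2 : s.1 ≠ (f t).1 := fun h => (f t).2 (h ▸ s.2)
    have h3 : (f s).1 ≠ t.1 := fun h => (f s).2 (h ▸ t.2)
    have h4 : (f s).1 ≠ (f t).1 := fun h => hst (f.injective (Subtype.ext h))
    rcases sortedPair_eq_or s.1 (f s).1 with h | h <;>
      rcases sortedPair_eq_or t.1 (f t).1 with h' | h' <;> rw [h, h'] <;> grind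

theorem IsMatching.exists_matchingOfEmb_eq (hM : IsMatching n d M) (hX : FullyCrosses n M S)
    (hS : #S = d) : ∃ f, matchingOfEmb S f = M := by
  have hcover : ∀ s : S, ∃ e ∈ M, endIn S e = s := fun s =>
    mem_image.1 ((hM.image_endIn hX hS).symm ▸ s.2)
  choose e he hes using hcover
  have hout : ∀ s, endOut S (e s) ∉ S := fun s => by
    unfold endOut; rcases hX _ (he s) with h | h <;> simp [h]
  refine ⟨⟨fun s => ⟨endOut S (e s), hout s⟩, fun s t hst => ?_⟩, ?_⟩
  · have hinj : Set.InjOn (endOut S) M :=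
      hM.injOn_of_eq_fst_or_eq_snd fun e => by unfold endOut; split_ifs <;> simp
    have : e s = e t := hinj (he s) (he t) (congrArg Subtype.val hst)
    exact Subtype.ext ((hes s).symm.trans (this ▸ hes t))
  · refine eq_of_subset_of_card_le (fun x hx => ?_) ?_
    · obtain ⟨s, rfl⟩ := mem_matchingOfEmb.1 hx
      change sortedPair s.1 (endOut S (e s)) ∈ M
      rw [← hes s, sortedPair_endIn_endOut (hM.2.1 _ (he s))]
      exact he s
    · rw [(isMatching_matchingOfEmb hS _).1, hM.1]

def matchings (n d : ℕ) : Finset (Finset (Fin n × Fin n)) := {M | IsMatching n d M}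

@[simp]
theorem mem_matchings : M ∈ matchings n d ↔ IsMatching n d M := by
  simp [matchings]

theorem card_filter_matchings_fullyCrosses (hS : #S = d) :
    #{M ∈ matchings n d | FullyCrosses n M S} = (n - d).descFactorial d := by
  have hemb : Fintype.card (S ↪ {x // x ∉ S}) = (n - d).descFactorial d := by
    rw [Fintype.card_embedding_eq, Fintype.card_subtype_compl, Fintype.card_coe,
      Fintype.card_fin, hS]
  rw [← hemb, ← card_univ]
  symm
  refine card_bij (fun f _ => matchingOfEmb S f) (fun f _ => ?_)
    (fun f _ g _ h => matchingOfEmb_injective h) (fun M hM => ?_)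
  · rw [mem_filter, mem_matchings]
    exact ⟨isMatching_matchingOfEmb hS f, fullyCrosses_matchingOfEmb f⟩
  · rw [mem_filter, mem_matchings] at hM
    obtain ⟨f, hf⟩ := hM.1.exists_matchingOfEmb_eq hM.2 hS
    exact ⟨f, mem_univ _, hf⟩

theorem choose_mul_descFactorial_le_card_matchings_mul :
    n.choose d * (n - d).descFactorial d ≤ #(matchings n d) * 2 ^ d := by
  simpa using card_mul_le_card_mul (s := powersetCard d univ) (fun S M => FullyCrosses n M S)
    (fun S hS => (card_filter_matchings_fullyCrosses (mem_powersetCard_univ.1 hS)).ge)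
    (fun M hM => (mem_matchings.1 hM).card_filter_fullyCrosses_le)

theorem many_uniquely_crossing_matchings_general (n d : ℕ) (hnd : 2 * d ≤ n) :
    ∃ (𝓜 : Finset (Finset (Fin n × Fin n))) (𝓢 : Finset (Finset (Fin n))),
      (∀ M ∈ 𝓜, IsMatching n d M) ∧
      (∀ S ∈ 𝓢, S.card = d) ∧
      (𝓜.card : ℝ) ≥ (n.choose d : ℝ) / (4 * 2 ^ d) ∧
      (∀ S ∈ 𝓢, ∃! M, M ∈ 𝓜 ∧ FullyCrosses n M S) ∧
      (∀ M ∈ 𝓜, ∃ S ∈ 𝓢, FullyCrosses n M S) := by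
  set E := (n - d).descFactorial d
  have hE : 0 < E := Nat.descFactorial_pos.2 (by omega)
  obtain ⟨I, hIU, hIcard, hIfree⟩ := exists_independent_subset_of_card_filter_le
    (fun M M' => FullyCrosses n M' (leftEnds M)) E (matchings n d)
    fun M hM => (card_filter_matchings_fullyCrosses (mem_matchings.1 hM).card_leftEnds).le
  have hI : ∀ M ∈ I, IsMatching n d M := fun M hM => mem_matchings.1 (hIU hM)
  have hchoose : n.choose d ≤ #I * (4 * 2 ^ d) := by
    refine Nat.le_of_mul_le_mul_right ?_ hE
    calc n.choose d * E ≤ #(matchings n d) * 2 ^ d :=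
          choose_mul_descFactorial_le_card_matchings_mul
      _ ≤ (2 * E + 1) * #I * 2 ^ d := by gcongr
      _ ≤ 4 * E * #I * 2 ^ d := by gcongr; omega
      _ = #I * (4 * 2 ^ d) * E := by ring
  refine ⟨I, I.image leftEnds, hI, ?_, ?_, ?_, ?_⟩
  · simpa using fun M hM => (hI M hM).card_leftEnds
  · rw [ge_iff_le, div_le_iff₀ (by positivity)]
    exact_mod_cast hchoose
  · simp only [mem_image, forall_exists_index, and_imp]
    rintro _ M hM rfl
    exact ⟨M, ⟨hM, (hI M hM).fullyCrosses_leftEnds⟩,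
      fun M' ⟨hM', hX⟩ => (hIfree M hM M' hM' hX).symm⟩
  · exact fun M hM => ⟨_, mem_image_of_mem _ hM, (hI M hM).fullyCrosses_leftEnds⟩

/-- **Many uniquely crossing matchings.** For `n ≥ 2d` there is a set `𝓜` of
`d`-matchings on `[n]` with `|𝓜| ≥ C(n,d)/(4·2^d)` and a set `𝓢` of `d`-subsets such
that every `S ∈ 𝓢` is fully crossed by a unique matching in `𝓜`, and every `M ∈ 𝓜`
fully crosses at least one `S ∈ 𝓢`. -/
theorem many_uniquely_crossing_matchings (n d : ℕ) (hd : 1 ≤ d) (hnd : 2 * d ≤ n) :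
    ∃ (𝓜 : Finset (Finset (Fin n × Fin n))) (𝓢 : Finset (Finset (Fin n))),
      (∀ M ∈ 𝓜, IsMatching n d M) ∧
      (∀ S ∈ 𝓢, S.card = d) ∧
      (𝓜.card : ℝ) ≥ (n.choose d : ℝ) / (4 * 2 ^ d) ∧
      (∀ S ∈ 𝓢, ∃! M, M ∈ 𝓜 ∧ FullyCrosses n M S) ∧
      (∀ M ∈ 𝓜, ∃ S ∈ 𝓢, FullyCrosses n M S) :=
  many_uniquely_crossing_matchings_general n d hnd
end

section
/- If p is a homogeneous polynomial hyperbolic with respect to direction e and t_0 ∈ ℝ, then γ := min over critical points t of p_x (where p_x(t) = p(te + x)) of |p_x(t)| has the property that p_x + δ is real-rooted for all |δ| ≤ γ. -/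
open Polynomial

/-- A univariate real polynomial is real-rooted if it splits over ℝ. -/
def RealRooted (q : Polynomial ℝ) : Prop := (q.map (RingHom.id ℝ)).Splits

/-!
For `δ ≠ 0` the hypothesis forces the real roots `r₀ < ⋯ < r_{m-1}` of `q` to be simple,
so `m = deg q`. Choose `s₀ < r₀ < s₁ < ⋯ < r_{m-1} < s_m` with `s₀, s_m` far out (where
`|q| > |δ|`) and the inner `s_j` critical points given by Rolle. Then `q` changes sign from each
`s_j` to the next, and since `|δ| ≤ |q(s_j)|`, adding `δ` cannot reverse the sign of `q(s_j)`:
`q + δ` changes sign weakly at each step. Where `q + δ` vanishes at some `s_j`, that point is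
critical, hence a double root, which pays for both adjacent steps. So `q + δ` has at least
`deg q` real roots.
-/

open Set Filter

theorem Finset.exists_strictMonoOn_enum {α : Type*} [LinearOrder α] [Nonempty α]
    (s : Finset α) :
    ∃ r : ℕ → α, StrictMonoOn r (Set.Iio s.card) ∧
      ∀ x, x ∈ s ↔ ∃ i < s.card, r i = x := by
  classical
  set e := s.orderEmbOfFin rfl
  refine ⟨fun i => if h : i < s.card then e ⟨i, h⟩ else Classical.arbitrary α, ?_,
    fun x => ?_⟩
  · intro i hi j hj hij
    simp only [dif_pos (Set.mem_Iio.1 hi), dif_pos (Set.mem_Iio.1 hj)]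
    exact e.strictMono hij
  constructor
  · intro hx
    obtain ⟨i, rfl⟩ : x ∈ Set.range e := by rwa [s.range_orderEmbOfFin]
    exact ⟨i, i.2, dif_pos i.2⟩
  · rintro ⟨i, hi, rfl⟩
    dsimp only
    rw [dif_pos hi]
    exact s.orderEmbOfFin_mem rfl _

theorem Multiset.filter_le_eq_filter_le_add_filter_Ioc {α : Type*} [LinearOrder α]
    (s : Multiset α) {a b : α} (hab : a ≤ b) :
    s.filter (· ≤ b) = s.filter (· ≤ a) + s.filter (· ∈ Set.Ioc a b) := by
  have hdisj : s.filter (fun x => x ≤ a ∧ x ∈ Set.Ioc a b) = 0 :=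
    Multiset.filter_eq_nil.2 fun x _ ⟨hxa, hx⟩ => hx.1.not_ge hxa
  rw [Multiset.filter_add_filter, hdisj, add_zero]
  exact Multiset.filter_congr fun x _ => ⟨fun hx => (le_or_gt x a).imp_right (⟨·, hx⟩),
    fun h => h.elim (·.trans hab) (·.2)⟩

theorem add_mul_add_nonpos_of_mul_neg_of_abs_le {a b δ : ℝ} (hab : a * b < 0) (ha : |δ| ≤ |a|)
    (hb : |δ| ≤ |b|) : (a + δ) * (b + δ) ≤ 0 := by
  have same_sign : ∀ c : ℝ, |δ| ≤ |c| → 0 ≤ (c + δ) * c := fun c hc => by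
    rcases le_total 0 c with h | h
    · rw [abs_of_nonneg h] at hc; nlinarith [abs_le.1 hc]
    · rw [abs_of_nonpos h] at hc; nlinarith [abs_le.1 hc]
  nlinarith [mul_nonneg (same_sign a ha) (same_sign b hb)]

namespace Polynomial

variable {q f : ℝ[X]} {a b : ℝ}

theorem exists_isRoot_mem_Icc_of_eval_mul_eval_nonpos (hab : a ≤ b)
    (h : f.eval a * f.eval b ≤ 0) : ∃ x ∈ Icc a b, f.IsRoot x := by
  have h0 : (0 : ℝ) ∈ uIcc (f.eval a) (f.eval b) := by
    rcases mul_nonpos_iff.1 h with ⟨ha, hb⟩ | ⟨ha, hb⟩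
    exacts [mem_uIcc.2 (Or.inr ⟨hb, ha⟩), mem_uIcc.2 (Or.inl ⟨ha, hb⟩)]
  obtain ⟨x, hx, hx0⟩ := intermediate_value_uIcc f.continuousOn h0
  exact ⟨x, uIcc_of_le hab ▸ hx, hx0⟩

theorem ite_add_ite_le_card_roots_filter_Ioc (hf : f ≠ 0) (hab : a < b)
    (hsign : f.eval a * f.eval b ≤ 0) (hb : f.IsRoot b → f.derivative.IsRoot b) :
    (if f.IsRoot a then 0 else 1) + (if f.IsRoot b then 1 else 0) ≤
      Multiset.card (f.roots.filter (· ∈ Set.Ioc a b)) := by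
  classical
  by_cases hfb : f.IsRoot b
  · have hmult : 1 < f.rootMultiplicity b :=
      (one_lt_rootMultiplicity_iff_isRoot hf).2 ⟨hfb, hb hfb⟩
    have hcount := Multiset.count_le_card b (f.roots.filter (· ∈ Set.Ioc a b))
    rw [Multiset.count_filter_of_pos ⟨hab, le_rfl⟩, count_roots] at hcount
    split_ifs <;> omega
  by_cases hfa : f.IsRoot a
  · rw [if_pos hfa, if_neg hfb]
    exact Nat.zero_le _
  obtain ⟨x, hx, hfx⟩ := exists_isRoot_mem_Icc_of_eval_mul_eval_nonpos hab.le hsign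
  have hxa : a < x := hx.1.lt_of_ne fun h => hfa (h ▸ hfx)
  have hpos : 0 < Multiset.card (f.roots.filter (· ∈ Set.Ioc a b)) :=
    Multiset.card_pos_iff_exists_mem.2
      ⟨x, Multiset.mem_filter.2 ⟨(mem_roots hf).2 hfx, hxa, hx.2⟩⟩
  rwa [if_neg hfa, if_neg hfb]

theorem le_card_roots_of_sign_changes (hf : f ≠ 0) {m : ℕ} {s : ℕ → ℝ}
    (hs : ∀ j < m, s j < s (j + 1)) (hsign : ∀ j < m, f.eval (s j) * f.eval (s (j + 1)) ≤ 0)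
    (hcrit : ∀ j < m, f.IsRoot (s (j + 1)) → f.derivative.IsRoot (s (j + 1))) :
    m ≤ Multiset.card f.roots := by
  -- a root at `s k` is at least double, so it also pays for the next sign change
  have key : ∀ k ≤ m, k + (if f.IsRoot (s k) then 1 else 0) ≤
      Multiset.card (f.roots.filter (· ≤ s k)) := by
    intro k hk
    induction k with
    | zero =>
      split_ifs with h
      · exact Multiset.card_pos_iff_exists_mem.2
          ⟨s 0, Multiset.mem_filter.2 ⟨(mem_roots hf).2 h, le_rfl⟩⟩
      · simp
    | succ k ih =>
      have hstep := ite_add_ite_le_card_roots_filter_Ioc hf (hs k hk) (hsign k hk) (hcrit k hk)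
      have ih := ih (by omega)
      rw [Multiset.filter_le_eq_filter_le_add_filter_Ioc _ (hs k hk).le, Multiset.card_add]
      split_ifs at * <;> omega
  exact (Nat.le_add_right _ _).trans ((key m le_rfl).trans
    (Multiset.card_le_card (Multiset.filter_le _ _)))

theorem eval_mul_eval_neg_of_unique_simple_root {r : ℝ} (har : a < r) (hrb : r < b)
    (hr : q.IsRoot r) (hr' : ¬ q.derivative.IsRoot r)
    (honly : ∀ x ∈ Icc a b, q.IsRoot x → x = r) : q.eval a * q.eval b < 0 := by
  set g := q /ₘ (X - C r)
  have hq : q = (X - C r) * g := (mul_divByMonic_eq_iff_isRoot.2 hr).symm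
  have hg : ∀ x ∈ Icc a b, ¬ g.IsRoot x := by
    intro x hx hgx
    rcases eq_or_ne x r with rfl | hxr
    · refine hr' ?_
      rw [hq]
      simpa [IsRoot] using hgx
    · exact hxr (honly x hx (by rw [hq]; simp [hgx.eq_zero]))
  have hgab : 0 < g.eval a * g.eval b := by
    by_contra! h
    obtain ⟨x, hx, hgx⟩ := exists_isRoot_mem_Icc_of_eval_mul_eval_nonpos (har.trans hrb).le h
    exact hg x hx hgx
  have hab : (a - r) * (b - r) < 0 := mul_neg_of_neg_of_pos (by linarith) (by linarith)
  calc q.eval a * q.eval b = (a - r) * (b - r) * (g.eval a * g.eval b) := by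
        rw [hq]; simp; ring
    _ < 0 := mul_neg_of_neg_of_pos hab hgab

theorem exists_between_roots_critical_or_lt_abs_eval (hq : 0 < q.degree) (M : ℝ) {m : ℕ}
    {r : ℕ → ℝ} (hr : StrictMonoOn r (Iio m)) (hroot : ∀ i < m, q.IsRoot (r i)) {j : ℕ}
    (hj : j ≤ m) :
    ∃ y, (q.derivative.IsRoot y ∨ M < |q.eval y|) ∧
      (∀ i < j, r i < y) ∧ (∀ i, j ≤ i → i < m → y < r i) := by
  have hmono : ∀ {i k}, i ≤ k → k < m → r i ≤ r k := fun hik hk =>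
    hr.monotoneOn (mem_Iio.2 (hik.trans_lt hk)) (mem_Iio.2 hk) hik
  rcases j with _ | k
  · obtain ⟨y, hyM, hy⟩ :=
      ((q.abs_tendsto_atBot hq).eventually_gt_atTop M |>.and (eventually_lt_atBot (r 0))).exists
    exact ⟨y, Or.inr hyM, by simp, fun i _ hi => hy.trans_le (hmono (Nat.zero_le i) hi)⟩
  rcases Nat.lt_or_ge (k + 1) m with hkm | hkm
  · obtain ⟨c, hc, hc'⟩ := exists_deriv_eq_zero (hr (mem_Iio.2 (by omega)) (mem_Iio.2 hkm)
      k.lt_succ_self) q.continuousOn ((hroot k (by omega)).trans (hroot (k + 1) hkm).symm)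
    rw [Polynomial.deriv] at hc'
    exact ⟨c, Or.inl hc', fun i hi => (hmono (by omega) (by omega)).trans_lt hc.1,
      fun i hi him => hc.2.trans_le (hmono hi him)⟩
  · obtain ⟨y, hyM, hy⟩ :=
      ((q.abs_tendsto_atTop hq).eventually_gt_atTop M |>.and (eventually_gt_atTop (r k))).exists
    exact ⟨y, Or.inr hyM, fun i hi => (hmono (by omega) (by omega)).trans_lt hy,
      fun i hi him => by omega⟩

theorem nodup_roots_of_forall_isRoot_not_isRoot_derivative {R : Type*} [CommRing R]
    [IsDomain R] {p : R[X]} (h : ∀ x, p.IsRoot x → ¬ p.derivative.IsRoot x) :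
    p.roots.Nodup := by
  classical
  refine Multiset.nodup_iff_count_le_one.2 fun x => ?_
  rcases eq_or_ne p 0 with rfl | hp0
  · simp
  rw [count_roots, ← not_lt, one_lt_rootMultiplicity_iff_isRoot hp0]
  exact fun ⟨hx, hx'⟩ => h x hx hx'

theorem card_roots_toFinset_le_card_roots_add_C
    (hsimple : ∀ x, q.IsRoot x → ¬ q.derivative.IsRoot x) {δ : ℝ}
    (hδ : ∀ t, q.derivative.IsRoot t → |δ| ≤ |q.eval t|) :
    q.roots.toFinset.card ≤ Multiset.card (q + C δ).roots := by
  obtain ⟨r, hr, hroots⟩ := q.roots.toFinset.exists_strictMonoOn_enum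
  set m := q.roots.toFinset.card
  rcases Nat.eq_zero_or_pos m with hm | hm
  · exact hm ▸ Nat.zero_le _
  have hq0 : q ≠ 0 :=
    ne_zero_of_mem_roots (Multiset.mem_toFinset.1 ((hroots (r 0)).2 ⟨0, hm, rfl⟩))
  simp only [Multiset.mem_toFinset, mem_roots hq0] at hroots
  have hroot : ∀ i < m, q.IsRoot (r i) := fun i hi => (hroots _).2 ⟨i, hi, rfl⟩
  have hdeg : 0 < q.degree := degree_pos_of_root hq0 (hroot 0 hm)
  choose! s hs_good hs_above hs_below using fun j (hj : j ≤ m) =>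
    exists_between_roots_critical_or_lt_abs_eval hdeg |δ| hr hroot hj
  have hs_le : ∀ j ≤ m, |δ| ≤ |q.eval (s j)| := fun j hj =>
    (hs_good j hj).elim (hδ _) le_of_lt
  have hq_sign : ∀ j < m, q.eval (s j) * q.eval (s (j + 1)) < 0 := fun j hj =>
    eval_mul_eval_neg_of_unique_simple_root (hs_below j hj.le j le_rfl hj)
      (hs_above (j + 1) hj j j.lt_succ_self) (hroot j hj) (hsimple _ (hroot j hj))
      fun x hx hqx => by
        obtain ⟨i, hi, rfl⟩ := (hroots x).1 hqx
        rcases lt_trichotomy i j with hij | rfl | hij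
        · exact absurd hx.1 (hs_above j hj.le i hij).not_ge
        · rfl
        · exact absurd hx.2 (hs_below (j + 1) hj i hij hi).not_ge
  have hf_crit : ∀ j ≤ m, (q + C δ).IsRoot (s j) → (q + C δ).derivative.IsRoot (s j) := by
    intro j hj hfs
    rw [derivative_add, derivative_C, add_zero]
    refine (hs_good j hj).resolve_right fun hlt => hlt.ne ?_
    have hval : q.eval (s j) = -δ := by simpa [add_eq_zero_iff_eq_neg] using hfs
    rw [hval, abs_neg]
  refine le_card_roots_of_sign_changes ?_ (s := s)
    (fun j hj => (hs_below j hj.le j le_rfl hj).trans (hs_above (j + 1) hj j j.lt_succ_self))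
    (fun j hj => ?_) (fun j hj => hf_crit (j + 1) hj)
  · intro h
    exact (natDegree_pos_iff_degree_pos.2 hdeg).ne'
      (by rw [← natDegree_add_C (a := δ), h, natDegree_zero])
  · simpa using
      add_mul_add_nonpos_of_mul_neg_of_abs_le (hq_sign j hj) (hs_le j hj.le) (hs_le (j + 1) hj)

theorem Splits.add_C_of_abs_le_critical_values (hq : q.Splits) {δ : ℝ}
    (hδ : ∀ t, q.derivative.IsRoot t → |δ| ≤ |q.eval t|) : (q + C δ).Splits := by
  rcases eq_or_ne δ 0 with rfl | hδ0
  · simpa using hq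
  have hsimple : ∀ x, q.IsRoot x → ¬ q.derivative.IsRoot x := fun x hx hx' =>
    hδ0 (abs_nonpos_iff.1 (by simpa [hx.eq_zero] using hδ x hx'))
  rw [splits_iff_card_roots]
  refine le_antisymm (card_roots' _) ?_
  calc (q + C δ).natDegree = q.natDegree := natDegree_add_C
    _ = q.roots.toFinset.card := by
      rw [hq.natDegree_eq_card_roots, Multiset.toFinset_card_of_nodup
        (nodup_roots_of_forall_isRoot_not_isRoot_derivative hsimple)]
    _ ≤ Multiset.card (q + C δ).roots := card_roots_toFinset_le_card_roots_add_C hsimple hδ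

end Polynomial

theorem realRooted_of_perturbation_below_critical_values_general
    (n : ℕ) (p : MvPolynomial (Fin n) ℝ)
    (e : Fin n → ℝ)
    (hhyp : ∀ (x : Fin n → ℝ) (q : Polynomial ℝ),
      (∀ t : ℝ, q.eval t = MvPolynomial.eval (fun i => t * e i + x i) p) → RealRooted q)
    (x : Fin n → ℝ) (q : Polynomial ℝ)
    (hq : ∀ t : ℝ, q.eval t = MvPolynomial.eval (fun i => t * e i + x i) p)
    (γ : ℝ)
    (hγ : ∀ t : ℝ, q.derivative.eval t = 0 → γ ≤ |q.eval t|) :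
    ∀ δ : ℝ, |δ| ≤ γ → RealRooted (q + C δ) := by
  intro δ hδ
  have hsplits : q.Splits := by simpa [RealRooted] using hhyp x q hq
  simpa [RealRooted] using
    hsplits.add_C_of_abs_le_critical_values fun t ht => hδ.trans (hγ t ht)

/-- If `p` is a homogeneous polynomial hyperbolic with respect to `e`, `x ∈ ℝⁿ`, and
`q(t) = p(te + x)` is the restriction, then whenever `0 ≤ γ ≤ |q(t)|` for every
critical point `t` of `q`, the perturbation `q + δ` is real-rooted for all `|δ| ≤ γ`. -/
theorem realRooted_of_perturbation_below_critical_values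
    (n d : ℕ) (p : MvPolynomial (Fin n) ℝ) (hhom : p.IsHomogeneous d)
    (e : Fin n → ℝ) (he : MvPolynomial.eval e p ≠ 0)
    (hhyp : ∀ (x : Fin n → ℝ) (q : Polynomial ℝ),
      (∀ t : ℝ, q.eval t = MvPolynomial.eval (fun i => t * e i + x i) p) → RealRooted q)
    (x : Fin n → ℝ) (q : Polynomial ℝ)
    (hq : ∀ t : ℝ, q.eval t = MvPolynomial.eval (fun i => t * e i + x i) p)
    (γ : ℝ) (hγ0 : 0 ≤ γ)
    (hγ : ∀ t : ℝ, q.derivative.eval t = 0 → γ ≤ |q.eval t|) :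
    ∀ δ : ℝ, |δ| ≤ γ → RealRooted (q + C δ) :=
  realRooted_of_perturbation_below_critical_values_general n p e hhyp x q hq γ hγ
end

section
/- The restriction of e_d along the ray t𝟏 + 𝟙_S for a d-subset S of [n] equals J(t) = (1/(n-d)!) · D^{n-d}[t^{n-d}(t+1)^d]. -/
open Polynomial Finset

/-- The `k`-th elementary symmetric polynomial of `x 1, ..., x n`. -/
noncomputable def esymm (n k : ℕ) (x : Fin n → ℝ) : ℝ :=
  ∑ S ∈ Finset.powersetCard k (Finset.univ : Finset (Fin n)), ∏ i ∈ S, x i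

/-- The restriction of `e_d` along `t𝟏 + 𝟙_S`, for a `d`-subset `S` of `[n]`, equals
`J(t) = (1/(n-d)!) · D^{n-d}[t^{n-d}(t+1)^d]`. -/
theorem esymm_restriction_eq_jacobi (n d : ℕ) (hd : 1 ≤ d) (hdn : d ≤ n)
    (S : Finset (Fin n)) (hS : S.card = d) (r : Polynomial ℝ)
    (hr : ∀ t : ℝ, r.eval t = esymm n d (fun i => t + if i ∈ S then 1 else 0)) :
    r = (1 / ((n - d).factorial : ℝ)) •
      (Polynomial.derivative^[n - d] ((X : Polynomial ℝ) ^ (n - d) * (X + 1) ^ d)) := by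
  set m := n - d with hm
  set P : Polynomial ℝ := X ^ m * (X + 1) ^ d with hP
  apply Polynomial.funext
  intro t
  rw [hr t]
  have hder : Polynomial.derivative^[m] P = m.factorial • Polynomial.hasseDeriv m P := by
    rw [← Polynomial.factorial_smul_hasseDeriv]; rfl
  have h1 : ((1 / ((m).factorial : ℝ)) •
      (Polynomial.derivative^[m] P)).eval t = (Polynomial.hasseDeriv m P).eval t := by
    rw [hder]
    simp only [eval_smul, smul_eq_mul, nsmul_eq_mul, eval_mul, eval_natCast]
    rw [← mul_assoc, one_div, inv_mul_cancel₀, one_mul]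
    exact_mod_cast (Nat.factorial_ne_zero m)
  rw [h1, ← Polynomial.taylor_coeff, Polynomial.taylor_apply]
  have hprod : P.comp (X + C t)
      = ∏ i : Fin n, (X + C (t + if i ∈ S then (1:ℝ) else 0)) := by
    rw [hP, mul_comp, pow_comp, pow_comp, X_comp, add_comp, X_comp, one_comp]
    rw [← Finset.prod_mul_prod_compl S (fun i => X + C (t + if i ∈ S then (1:ℝ) else 0))]
    have h2 : ∏ i ∈ S, (X + C (t + if i ∈ S then (1:ℝ) else 0)) = (X + C t + 1) ^ d := by
      rw [Finset.prod_congr rfl (fun i hi => by rw [if_pos hi]), Finset.prod_const, hS]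
      simp [C_add, add_assoc]
    have h3 : ∏ i ∈ Sᶜ, (X + C (t + if i ∈ S then (1:ℝ) else 0)) = (X + C t) ^ m := by
      rw [Finset.prod_congr rfl (fun i hi => by
        rw [if_neg (Finset.mem_compl.mp hi), add_zero]), Finset.prod_const,
        Finset.card_compl, hS, Fintype.card_fin]
    rw [h2, h3, mul_comm]
  rw [hprod, Finset.prod_X_add_C_coeff _ _ (by simp [hm])]
  have : #(univ : Finset (Fin n)) - m = d := by
    simp [hm, Fintype.card_fin]; omega
  rw [this]
  rfl
end

section
/- Let J be a real-rooted polynomial of degree d with positive leading coefficient, all roots in [-1,0], and largest root z_d. Then for 0 < θ < 1/n (n ≥ d), J(z_d + θ) ≤ C(n,d) · d · θ · e, where C(n,d) is the leading coefficient bound; consequently for ε > 0, the largest root of J(t) - ε exceeds z_d + ε/(C(n,d)·d·e) whenever ε is small enough. -/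
/-!
Write `J(z_d + θ) = lc(J) · θ · ∏ (z_d + θ - z)` over the remaining roots. Since all roots lie in
`[-1, z_d]` and `z_d ≤ 0`, each of the `d - 1` remaining factors lies in `[0, 1 + θ]`, and
`(1 + θ)^(d-1) ≤ e^{(d-1)θ} ≤ e` because `(d - 1)θ < nθ < 1`. For the root shift, `J - ε` is
nonpositive at `z_d + ε/(C(n,d)·d·e)` by the first bound and tends to `+∞`, so by the intermediate
value theorem it has a root to the right of that point.
-/

open Polynomial

theorem Polynomial.Splits.eval_add_le {p : ℝ[X]} (hp : p.Splits) (hlead : 0 ≤ p.leadingCoeff)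
    {a r θ : ℝ} (hr : p.IsRoot r) (hroots : ∀ z, p.IsRoot z → a ≤ z ∧ z ≤ r) (hθ : 0 ≤ θ) :
    p.eval (r + θ) ≤ p.leadingCoeff * θ * (r + θ - a) ^ (p.natDegree - 1) := by
  rcases eq_or_ne p 0 with rfl | hp0
  · simp
  have hr_mem : r ∈ p.roots := (mem_roots hp0).mpr hr
  set t := p.roots.erase r
  have hcons : r ::ₘ t = p.roots := Multiset.cons_erase hr_mem
  have hcard : Multiset.card t = p.natDegree - 1 := by
    rw [hp.natDegree_eq_card_roots, ← hcons, Multiset.card_cons, Nat.add_sub_cancel]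
  have hfactor : ∀ z ∈ t, 0 ≤ r + θ - z ∧ r + θ - z ≤ r + θ - a := by
    intro z hz
    obtain ⟨haz, hzr⟩ := hroots z ((mem_roots hp0).mp (Multiset.mem_of_mem_erase hz))
    constructor <;> linarith
  have hprod : (t.map (r + θ - ·)).prod ≤ (r + θ - a) ^ (p.natDegree - 1) := by
    rw [← hcard, ← Multiset.prod_replicate, ← Multiset.map_const']
    exact Multiset.prod_map_le_prod_map₀ _ _ (fun z hz => (hfactor z hz).1)
      (fun z hz => (hfactor z hz).2)
  rw [hp.eval_eq_prod_roots, ← hcons, Multiset.map_cons, Multiset.prod_cons, add_sub_cancel_left,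
    mul_assoc]
  gcongr

theorem Real.one_add_pow_le_exp_one {θ : ℝ} {k : ℕ} (hθ : -1 ≤ θ) (hkθ : k * θ ≤ 1) :
    (1 + θ) ^ k ≤ Real.exp 1 :=
  calc (1 + θ) ^ k ≤ Real.exp θ ^ k := by
        gcongr
        · linarith
        · linarith [Real.add_one_le_exp θ]
    _ = Real.exp (k * θ) := (Real.exp_nat_mul θ k).symm
    _ ≤ Real.exp 1 := Real.exp_le_exp.mpr hkθ

theorem Polynomial.exists_isRoot_sub_C_ge {p : ℝ[X]} (hdeg : 0 < p.degree)
    (hlead : 0 < p.leadingCoeff) {x ε : ℝ} (hx : p.eval x ≤ ε) :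
    ∃ c, x ≤ c ∧ (p - C ε).IsRoot c := by
  have htend := p.tendsto_atTop_of_leadingCoeff_nonneg hdeg hlead.le
  obtain ⟨b, hb, hxb⟩ := ((htend.eventually_ge_atTop ε).and (Filter.eventually_ge_atTop x)).exists
  obtain ⟨c, hc, hpc⟩ := intermediate_value_Icc hxb p.continuous.continuousOn ⟨hx, hb⟩
  exact ⟨c, hc.1, by simp [hpc]⟩

/-- Let `J` be real-rooted of degree `d ≤ n` with positive leading coefficient bounded by
`C(n,d)`, all roots in `[-1,0]`, and largest root `zd`. Then for `0 < θ < 1/n` one has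
`J(zd + θ) ≤ C(n,d)·d·θ·e`, and consequently for every small enough `ε > 0` the largest
root of `J - ε` is at least `zd + ε/(C(n,d)·d·e)`. -/
theorem jacobi_value_and_root_shift (n d : ℕ) (hd : 1 ≤ d) (hdn : d ≤ n)
    (J : Polynomial ℝ) (hsplit : J.Splits) (hdeg : J.natDegree = d)
    (hlead : 0 < J.leadingCoeff) (hleadle : J.leadingCoeff ≤ (n.choose d : ℝ))
    (hroots : ∀ x : ℝ, J.IsRoot x → -1 ≤ x ∧ x ≤ 0)
    (zd : ℝ) (hzd : J.IsRoot zd) (hzdmax : ∀ x : ℝ, J.IsRoot x → x ≤ zd) :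
    (∀ θ : ℝ, 0 < θ → θ < 1 / (n : ℝ) →
        J.eval (zd + θ) ≤ (n.choose d : ℝ) * d * θ * Real.exp 1) ∧
    (∀ ε : ℝ, 0 < ε → ε < (n.choose d : ℝ) * d * Real.exp 1 / (n : ℝ) →
      ∀ μ : ℝ, (J - C ε).IsRoot μ → (∀ y : ℝ, (J - C ε).IsRoot y → y ≤ μ) →
        μ ≥ zd + ε / ((n.choose d : ℝ) * d * Real.exp 1)) := by
  have hn : (0 : ℝ) < n := by exact_mod_cast hd.trans hdn
  have hdR : (1 : ℝ) ≤ d := by exact_mod_cast hd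
  have hchoose : (0 : ℝ) < n.choose d := by exact_mod_cast Nat.choose_pos hdn
  have hzd0 : zd ≤ 0 := (hroots zd hzd).2
  have value_bound : ∀ θ : ℝ, 0 < θ → θ < 1 / (n : ℝ) →
      J.eval (zd + θ) ≤ (n.choose d : ℝ) * d * θ * Real.exp 1 := by
    intro θ hθ hθn
    have hdθ : ((d - 1 : ℕ) : ℝ) * θ ≤ 1 := by
      have : ((d - 1 : ℕ) : ℝ) ≤ n := by exact_mod_cast (Nat.sub_le d 1).trans hdn
      rw [lt_div_iff₀ hn] at hθn
      nlinarith
    have hsplit_bound := hsplit.eval_add_le hlead.le hzd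
      (fun z hz => ⟨(hroots z hz).1, hzdmax z hz⟩) hθ.le
    have hzd1 : 0 ≤ zd + θ - -1 := by linarith [(hroots zd hzd).1]
    calc J.eval (zd + θ) ≤ J.leadingCoeff * θ * (zd + θ - -1) ^ (d - 1) := hdeg ▸ hsplit_bound
      _ ≤ n.choose d * θ * (1 + θ) ^ (d - 1) := by gcongr; linarith
      _ ≤ n.choose d * 1 * θ * Real.exp 1 := by
        rw [mul_one]; gcongr; exact Real.one_add_pow_le_exp_one (by linarith) hdθ
      _ ≤ n.choose d * d * θ * Real.exp 1 := by gcongr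
  refine ⟨value_bound, fun ε hε hεlt μ _ hμmax => ?_⟩
  set K := (n.choose d : ℝ) * d * Real.exp 1
  have hK : 0 < K := by positivity
  have hθn : ε / K < 1 / n := by
    rw [div_lt_div_iff₀ hK hn]
    rw [lt_div_iff₀ hn] at hεlt
    linarith
  have hJ_shift : J.eval (zd + ε / K) ≤ ε :=
    calc J.eval (zd + ε / K) ≤ n.choose d * d * (ε / K) * Real.exp 1 :=
          value_bound _ (div_pos hε hK) hθn
      _ = K * (ε / K) := by ring
      _ = ε := mul_div_cancel₀ ε hK.ne'
  have hJdeg : 0 < J.degree := degree_pos_of_root (leadingCoeff_ne_zero.mp hlead.ne') hzd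
  obtain ⟨c, hc, hroot⟩ := exists_isRoot_sub_C_ge hJdeg hlead hJ_shift
  exact hc.trans (hμmax c hroot)
end

section
/- If a spectrahedral cone K = {x ∈ ℝ^n : Σ_i C_i x_i ⪰ 0} contains the nonnegative orthant ℝ_+^n, then K admits a normalized spectrahedral representation: matrices C''_1,...,C''_n with each C''_i ⪰ 0 and Σ_i C''_i equal to the identity, such that K = {x : Σ_i C''_i x_i ⪰ 0}. -/
/-!
Evaluating the orthant condition at the unit vectors shows that every `Cᵢ` is positive
semidefinite. Hence `S = ∑ Cᵢ ⪰ 0`, and `ker S ⊆ ker Cᵢ` for each `i` (if `vᴴ S v = 0` then every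
`vᴴ Cᵢ v = 0`), so `ker S ⊆ ker M` for every `M = ∑ xᵢ Cᵢ`.

The spectral theorem gives a factorization `S = Aᴴ A` in which `A` has `r = rank S` rows and a
right inverse `Bᴴ` (keep the rows of `√D Uᴴ` and `√D⁻¹ Uᴴ` for the nonzero eigenvalues). Put
`C''ᵢ = B Cᵢ Bᴴ`; then `∑ C''ᵢ = (A Bᴴ)ᴴ (A Bᴴ) = 1`. Moreover `S Bᴴ A = S`, so the columns of
`1 - Bᴴ A` lie in `ker S ⊆ ker M`, whence `M = M Bᴴ A = Aᴴ (B M Bᴴ) A`. So each of `M` and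
`B M Bᴴ` is a congruence transform of the other, and one is positive semidefinite iff the other is.
-/

open Matrix
open scoped ComplexOrder

namespace Matrix

variable {𝕜 : Type*} [RCLike 𝕜] {m n : Type*}

lemma submatrix_diagonal_mul_conjTranspose_submatrix_diagonal [Fintype n] [DecidableEq m]
    [DecidableEq n] {f : m → n} (hf : Function.Injective f) (d d' : n → 𝕜) :
    (diagonal d).submatrix f id * ((diagonal d').submatrix f id)ᴴ =
      diagonal fun a ↦ d (f a) * star (d' (f a)) := by
  rw [conjTranspose_submatrix, diagonal_conjTranspose,
    ← submatrix_mul _ _ _ _ _ Function.bijective_id, diagonal_mul_diagonal,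
    submatrix_diagonal _ _ hf]
  rfl

lemma conjTranspose_submatrix_diagonal_mul_submatrix_diagonal [Fintype m] [DecidableEq n]
    {f : m → n} (hf : Function.Injective f) {d : n → 𝕜} (hd : ∀ j ∉ Set.range f, d j = 0)
    (d' : n → 𝕜) :
    ((diagonal d).submatrix f id)ᴴ * (diagonal d').submatrix f id =
      diagonal fun j ↦ star (d j) * d' j := by
  ext i j
  by_cases hi : i ∈ Set.range f
  · obtain ⟨a, rfl⟩ := hi
    rw [mul_apply, Fintype.sum_eq_single a fun b hb ↦ by simp [diagonal_apply, hf.ne hb]]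
    simp [diagonal_apply, eq_comm]
  · simp [mul_apply, diagonal_apply, hd i hi]

lemma exists_diagonal_eq_conjTranspose_mul_self_mul_conjTranspose_eq_one [Fintype n]
    [DecidableEq n] {d : n → ℝ} (hd : 0 ≤ d) :
    ∃ (r : ℕ) (A B : Matrix (Fin r) n 𝕜),
      diagonal (RCLike.ofReal ∘ d) = Aᴴ * A ∧ A * Bᴴ = 1 := by
  let e := (Fintype.equivFin {j // d j ≠ 0}).symm
  let f : Fin _ → n := fun a ↦ e a
  have hf : Function.Injective f := Subtype.val_injective.comp e.injective
  have hf_range : ∀ j ∉ Set.range f, d j = 0 := fun j hj ↦ by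
    by_contra h
    exact hj ⟨e.symm ⟨j, h⟩, by simp [f]⟩
  let s : n → 𝕜 := fun j ↦ (√(d j) : ℝ)
  refine ⟨_, (diagonal s).submatrix f id, (diagonal s⁻¹).submatrix f id, ?_, ?_⟩
  · rw [conjTranspose_submatrix_diagonal_mul_submatrix_diagonal hf]
    · congr 1
      ext j
      simp [s, ← RCLike.ofReal_mul, Real.mul_self_sqrt (hd j)]
    · intro j hj
      simp [s, hf_range j hj]
  · rw [submatrix_diagonal_mul_conjTranspose_submatrix_diagonal hf, ← diagonal_one]
    congr 1
    ext a
    have hsqrt : √(d (f a)) ≠ 0 := by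
      simpa [Real.sqrt_eq_zero', not_le] using (hd (f a)).lt_of_ne' (e a).2
    simp [s, hsqrt]

lemma PosSemidef.exists_eq_conjTranspose_mul_self_mul_conjTranspose_eq_one [Fintype n]
    [DecidableEq n] {S : Matrix n n 𝕜} (hS : S.PosSemidef) :
    ∃ (r : ℕ) (A B : Matrix (Fin r) n 𝕜), S = Aᴴ * A ∧ A * Bᴴ = 1 := by
  obtain ⟨r, A, B, hD, hAB⟩ :=
    exists_diagonal_eq_conjTranspose_mul_self_mul_conjTranspose_eq_one (𝕜 := 𝕜)
      hS.eigenvalues_nonneg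
  let U : Matrix n n 𝕜 := hS.1.eigenvectorUnitary
  have hU : Uᴴ * U = 1 := Unitary.coe_star_mul_self _
  refine ⟨r, A * Uᴴ, B * Uᴴ, ?_, ?_⟩
  · rw [hS.1.spectral_theorem, Unitary.conjStarAlgAut_apply, hD]
    simp [conjTranspose_mul, Matrix.mul_assoc, star_eq_conjTranspose, U]
  · calc A * Uᴴ * (B * Uᴴ)ᴴ = A * (Uᴴ * U) * Bᴴ := by
          simp [conjTranspose_mul, Matrix.mul_assoc]
      _ = 1 := by rw [hU, Matrix.mul_one, hAB]

lemma PosSemidef.mulVec_eq_zero_of_sum_mulVec_eq_zero [Fintype n] {ι : Type*} {s : Finset ι}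
    {C : ι → Matrix n n 𝕜} (hC : ∀ i ∈ s, (C i).PosSemidef) {v : n → 𝕜}
    (hv : (∑ i ∈ s, C i) *ᵥ v = 0) {j : ι} (hj : j ∈ s) : C j *ᵥ v = 0 := by
  have hsum : ∑ i ∈ s, star v ⬝ᵥ C i *ᵥ v = 0 := by
    rw [← dotProduct_sum, ← sum_mulVec, hv, dotProduct_zero]
  rw [Finset.sum_eq_zero_iff_of_nonneg fun i hi ↦ (hC i hi).dotProduct_mulVec_nonneg v] at hsum
  exact ((hC j hj).dotProduct_mulVec_zero_iff v).mp (hsum j hj)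

lemma PosSemidef.sum_smul_mulVec_eq_zero_of_sum_mulVec_eq_zero [Fintype n] {ι : Type*}
    {s : Finset ι} {C : ι → Matrix n n 𝕜} (hC : ∀ i ∈ s, (C i).PosSemidef) (x : ι → 𝕜)
    {v : n → 𝕜} (hv : (∑ i ∈ s, C i) *ᵥ v = 0) : (∑ i ∈ s, x i • C i) *ᵥ v = 0 := by
  rw [sum_mulVec]
  refine Finset.sum_eq_zero fun i hi ↦ ?_
  rw [smul_mulVec, PosSemidef.mulVec_eq_zero_of_sum_mulVec_eq_zero hC hv hi, smul_zero]

section Congruence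

variable [Fintype m] [Fintype n] [DecidableEq m] [DecidableEq n] {M : Matrix n n 𝕜}
  {A B : Matrix m n 𝕜}

lemma IsHermitian.eq_conjTranspose_mul_mul_of_ker_le (hM : M.IsHermitian) (hAB : A * Bᴴ = 1)
    (hker : ∀ v, (Aᴴ * A) *ᵥ v = 0 → M *ᵥ v = 0) :
    M = Aᴴ * (B * M * Bᴴ) * A := by
  have hSP : Aᴴ * A * (Bᴴ * A) = Aᴴ * A := by
    rw [Matrix.mul_assoc, ← Matrix.mul_assoc A, hAB, Matrix.one_mul]
  have hMP : M * (Bᴴ * A) = M := ext_of_mulVec_single fun j ↦ by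
    have h := hker ((1 - Bᴴ * A) *ᵥ Pi.single j 1) (by
      rw [mulVec_mulVec, Matrix.mul_sub, hSP, Matrix.mul_one, sub_self, zero_mulVec])
    rwa [mulVec_mulVec, Matrix.mul_sub, Matrix.mul_one, sub_mulVec, sub_eq_zero, eq_comm] at h
  calc M = (M * (Bᴴ * A))ᴴ := by rw [hMP, hM.eq]
    _ = Aᴴ * B * M := by
        rw [conjTranspose_mul, conjTranspose_mul, conjTranspose_conjTranspose, hM.eq]
    _ = Aᴴ * B * (M * (Bᴴ * A)) := by rw [hMP]
    _ = Aᴴ * (B * M * Bᴴ) * A := by simp only [Matrix.mul_assoc]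

lemma IsHermitian.posSemidef_iff_of_ker_le (hM : M.IsHermitian) (hAB : A * Bᴴ = 1)
    (hker : ∀ v, (Aᴴ * A) *ᵥ v = 0 → M *ᵥ v = 0) :
    M.PosSemidef ↔ (B * M * Bᴴ).PosSemidef := by
  refine ⟨fun h ↦ h.mul_mul_conjTranspose_same B, fun h ↦ ?_⟩
  rw [hM.eq_conjTranspose_mul_mul_of_ker_le hAB hker]
  exact h.conjTranspose_mul_mul_same A

end Congruence

end Matrix

theorem normalized_spectrahedral_representation_general (n k : ℕ)
    (C : Fin n → Matrix (Fin k) (Fin k) ℝ)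
    (horthant : ∀ x : Fin n → ℝ, (∀ i, 0 ≤ x i) → (∑ i, x i • C i).PosSemidef) :
    ∃ (k' : ℕ) (C'' : Fin n → Matrix (Fin k') (Fin k') ℝ),
      (∀ i, (C'' i).PosSemidef) ∧
      (∑ i, C'' i) = (1 : Matrix (Fin k') (Fin k') ℝ) ∧
      (∀ x : Fin n → ℝ, (∑ i, x i • C i).PosSemidef ↔ (∑ i, x i • C'' i).PosSemidef) := by
  have hC : ∀ i ∈ Finset.univ, (C i).PosSemidef := fun i _ ↦ by
    have hsingle : 0 ≤ (Pi.single i 1 : Fin n → ℝ) := by simp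
    simpa [Pi.single_apply] using horthant (Pi.single i 1) hsingle
  obtain ⟨r, A, B, hS, hAB⟩ :=
    (posSemidef_sum _ hC).exists_eq_conjTranspose_mul_self_mul_conjTranspose_eq_one
  refine ⟨r, fun i ↦ B * C i * Bᴴ, fun i ↦ (hC i (Finset.mem_univ i)).mul_mul_conjTranspose_same B,
    ?_, fun x ↦ ?_⟩
  · calc ∑ i, B * C i * Bᴴ = B * (∑ i, C i) * Bᴴ := by rw [Matrix.mul_sum, Matrix.sum_mul]
      _ = (A * Bᴴ)ᴴ * (A * Bᴴ) := by
          rw [hS, conjTranspose_mul, conjTranspose_conjTranspose]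
          simp only [Matrix.mul_assoc]
      _ = 1 := by rw [hAB, conjTranspose_one, Matrix.one_mul]
  · have hM : (∑ i, x i • C i).IsHermitian :=
      isSelfAdjoint_sum _ fun i hi ↦ (IsSelfAdjoint.all (x i)).smul (hC i hi).1
    have hconj : ∑ i, x i • (B * C i * Bᴴ) = B * (∑ i, x i • C i) * Bᴴ := by
      simp only [Matrix.mul_sum, Matrix.sum_mul, Matrix.mul_smul, Matrix.smul_mul]
    rw [hconj]
    exact hM.posSemidef_iff_of_ker_le hAB fun v hv ↦
      PosSemidef.sum_smul_mulVec_eq_zero_of_sum_mulVec_eq_zero hC x (hS ▸ hv)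

/-- If a spectrahedral cone `K = {x : Σᵢ xᵢ Cᵢ ⪰ 0}` contains the nonnegative orthant,
then `K` admits a normalized spectrahedral representation: matrices `C''ᵢ ⪰ 0` summing
to the identity and defining the same cone. -/
theorem normalized_spectrahedral_representation (n k : ℕ)
    (C : Fin n → Matrix (Fin k) (Fin k) ℝ) (hsymm : ∀ i, (C i).IsSymm)
    (horthant : ∀ x : Fin n → ℝ, (∀ i, 0 ≤ x i) → (∑ i, x i • C i).PosSemidef) :
    ∃ (k' : ℕ) (C'' : Fin n → Matrix (Fin k') (Fin k') ℝ),
      (∀ i, (C'' i).PosSemidef) ∧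
      (∑ i, C'' i) = (1 : Matrix (Fin k') (Fin k') ℝ) ∧
      (∀ x : Fin n → ℝ, (∑ i, x i • C i).PosSemidef ↔ (∑ i, x i • C'' i).PosSemidef) :=
  normalized_spectrahedral_representation_general n k C horthant
end

section
/- Let C = (C_1,...,C_n) and C' = (C'_1,...,C'_n) be normalized spectrahedral representations (each C_i, C'_i ⪰ 0 and Σ_i C_i = Σ_i C'_i = Id). Then the Hausdorff distance between the cones K_C and K_{C'} (intersected with the unit ball) is at most n^{3/2} · max_i ‖C_i - C'_i‖. -/
open Matrix

/-- The operator norm of a real matrix, acting on Euclidean space. -/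
noncomputable def matOpNorm {k : ℕ} (A : Matrix (Fin k) (Fin k) ℝ) : ℝ :=
  ‖Matrix.toEuclideanCLM (𝕜 := ℝ) A‖

/-!
Let `ε = maxᵢ ‖Cᵢ - C'ᵢ‖` and let `x ∈ K_C` with `‖x‖ ≤ 1`. Because `∑ C'ᵢ = 1`, moving `x` by
`t` along the all-ones vector adds `t ‖u‖²` to the quadratic form `uᵀ (∑ xᵢ C'ᵢ) u`, and this
absorbs the error `∑ xᵢ uᵀ (Cᵢ - C'ᵢ) u`, which is at most `‖x‖₁ ε ‖u‖² ≤ √n ε ‖u‖²`. Hence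
`x + √n ε 𝟏 ∈ K_{C'}`, a point at distance `n ε` from `x`. The metric projection of `x` onto the
closed convex cone `K_{C'}` is no farther, and it has norm at most `‖x‖` because `0 ∈ K_{C'}`.
So every point of either truncated cone lies within `n ε ≤ n^{3/2} ε` of the other one.
-/

open scoped RealInnerProductSpace

theorem abs_dotProduct_mulVec_le_matOpNorm {k : ℕ} (A : Matrix (Fin k) (Fin k) ℝ)
    (u : Fin k → ℝ) : |u ⬝ᵥ A *ᵥ u| ≤ matOpNorm A * (u ⬝ᵥ u) := by
  set v : EuclideanSpace ℝ (Fin k) := WithLp.toLp 2 u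
  have hquad : u ⬝ᵥ A *ᵥ u = ⟪v, Matrix.toEuclideanCLM (𝕜 := ℝ) A v⟫ := by
    simp [v, EuclideanSpace.inner_toLp_toLp, dotProduct_comm]
  have hsq : u ⬝ᵥ u = ‖v‖ ^ 2 := by
    rw [EuclideanSpace.real_norm_sq_eq]
    simp [v, dotProduct, sq]
  rw [hquad, hsq]
  calc |⟪v, Matrix.toEuclideanCLM (𝕜 := ℝ) A v⟫|
      ≤ ‖v‖ * ‖Matrix.toEuclideanCLM (𝕜 := ℝ) A v‖ := abs_real_inner_le_norm _ _
    _ ≤ ‖v‖ * (matOpNorm A * ‖v‖) := by gcongr; exact ContinuousLinearMap.le_opNorm _ _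
    _ = matOpNorm A * ‖v‖ ^ 2 := by ring

theorem EuclideanSpace.sum_abs_le_sqrt_card_mul_norm {ι : Type*} [Fintype ι]
    (x : EuclideanSpace ℝ ι) : ∑ i, |x i| ≤ √(Fintype.card ι) * ‖x‖ := by
  simpa [EuclideanSpace.norm_eq] using
    Real.sum_mul_le_sqrt_mul_sqrt Finset.univ (fun _ => (1 : ℝ)) (fun i => |x i|)

theorem EuclideanSpace.norm_toLp_const {ι : Type*} [Fintype ι] (t : ℝ) :
    ‖(WithLp.toLp 2 (fun _ : ι => t) : EuclideanSpace ℝ ι)‖ = √(Fintype.card ι) * |t| := by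
  simp [EuclideanSpace.norm_eq, Real.sqrt_mul, Real.sqrt_sq_eq_abs]

theorem Matrix.isClosed_setOf_posSemidef {m : Type*} [Fintype m] :
    IsClosed {A : Matrix m m ℝ | A.PosSemidef} := by
  have : {A : Matrix m m ℝ | A.PosSemidef} =
      {A | Aᴴ = A} ∩ ⋂ u : m → ℝ, {A | 0 ≤ u ⬝ᵥ A *ᵥ u} := by
    ext A
    simp [posSemidef_iff_dotProduct_mulVec, IsHermitian]
  rw [this]
  exact (isClosed_eq continuous_id.matrix_conjTranspose continuous_id).inter <|
    isClosed_iInter fun u => isClosed_le continuous_const <|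
      continuous_const.dotProduct (continuous_id.matrix_mulVec continuous_const)

theorem Matrix.convex_setOf_posSemidef {m : Type*} :
    Convex ℝ {A : Matrix m m ℝ | A.PosSemidef} :=
  fun _ hA _ hB _ _ ha hb _ => (hA.smul ha).add (hB.smul hb)

section SpectrahedralCone

variable {ι m : Type*} [Fintype ι]

def spectrahedralCone (C : ι → Matrix m m ℝ) : Set (EuclideanSpace ℝ ι) :=
  {x | (∑ i, x i • C i).PosSemidef}

theorem dotProduct_sum_smul_mulVec [Fintype m] (C : ι → Matrix m m ℝ) (x : ι → ℝ) (u : m → ℝ) :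
    u ⬝ᵥ (∑ i, x i • C i) *ᵥ u = ∑ i, x i * (u ⬝ᵥ C i *ᵥ u) := by
  simp [sum_mulVec, dotProduct_sum, smul_mulVec]

theorem mem_spectrahedralCone_iff [Fintype m] {C : ι → Matrix m m ℝ} (hC : ∀ i, (C i).IsHermitian)
    {x : EuclideanSpace ℝ ι} :
    x ∈ spectrahedralCone C ↔ ∀ u : m → ℝ, 0 ≤ ∑ i, x i * (u ⬝ᵥ C i *ᵥ u) := by
  have hherm : (∑ i, x i • C i).IsHermitian :=
    isSelfAdjoint_sum _ fun i _ => (hC i).smul (IsSelfAdjoint.all (x i))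
  simp only [spectrahedralCone, Set.mem_ofPred_eq, posSemidef_iff_dotProduct_mulVec, star_trivial,
    dotProduct_sum_smul_mulVec, and_iff_right hherm]

theorem zero_mem_spectrahedralCone (C : ι → Matrix m m ℝ) : 0 ∈ spectrahedralCone C := by
  simp [spectrahedralCone, PosSemidef.zero]

theorem convex_spectrahedralCone (C : ι → Matrix m m ℝ) : Convex ℝ (spectrahedralCone C) := by
  intro x hx y hy a b ha hb hab
  have : ∑ i, (a • x + b • y) i • C i = a • ∑ i, x i • C i + b • ∑ i, y i • C i := by
    simp [add_smul, mul_smul, Finset.sum_add_distrib, Finset.smul_sum]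
  change (∑ i, (a • x + b • y) i • C i).PosSemidef
  rw [this]
  exact convex_setOf_posSemidef hx hy ha hb hab

theorem isClosed_spectrahedralCone [Fintype m] (C : ι → Matrix m m ℝ) :
    IsClosed (spectrahedralCone C) :=
  isClosed_setOf_posSemidef.preimage <|
    continuous_finsetSum _ fun i _ => (PiLp.continuous_apply 2 _ i).smul continuous_const

end SpectrahedralCone

section Projection

variable {E : Type*} [NormedAddCommGroup E] [InnerProductSpace ℝ E] {K : Set E}

theorem Convex.exists_mem_norm_le_and_norm_sub_le (hK : Convex ℝ K) (hKc : IsComplete K)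
    (h0 : (0 : E) ∈ K) (x : E) {y : E} (hy : y ∈ K) :
    ∃ v ∈ K, ‖v‖ ≤ ‖x‖ ∧ ‖x - v‖ ≤ ‖x - y‖ := by
  obtain ⟨v, hv, hmin⟩ := exists_norm_eq_iInf_of_complete_convex ⟨0, h0⟩ hKc hK x
  -- the variational inequality at the point `0 ∈ K` gives `‖v‖² ≤ ⟪x, v⟫`
  have hvar := (norm_eq_iInf_iff_real_inner_le_zero hK hv).1 hmin 0 h0
  rw [zero_sub, inner_neg_right, inner_sub_left, real_inner_self_eq_norm_sq] at hvar
  refine ⟨v, hv, ?_, ?_⟩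
  · have := real_inner_le_norm x v
    nlinarith [norm_nonneg x, norm_nonneg v]
  · rw [hmin]
    exact ciInf_le ⟨0, Set.forall_mem_range.2 fun _ => norm_nonneg _⟩ (⟨y, hy⟩ : K)

theorem Convex.infDist_le_norm_sub (hK : Convex ℝ K) (hKc : IsComplete K) (h0 : (0 : E) ∈ K)
    {x y : E} {r : ℝ} (hx : ‖x‖ ≤ r) (hy : y ∈ K) :
    Metric.infDist x {z | z ∈ K ∧ ‖z‖ ≤ r} ≤ ‖x - y‖ := by
  obtain ⟨v, hv, hvx, hxv⟩ := hK.exists_mem_norm_le_and_norm_sub_le hKc h0 x hy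
  calc Metric.infDist x {z | z ∈ K ∧ ‖z‖ ≤ r}
      ≤ dist x v := Metric.infDist_le_dist_of_mem ⟨hv, hvx.trans hx⟩
    _ = ‖x - v‖ := dist_eq_norm x v
    _ ≤ ‖x - y‖ := hxv

end Projection

section Perturbation

variable {ι m : Type*} [Fintype ι] [Fintype m] [DecidableEq m]
  {C C' : ι → Matrix m m ℝ} {ε : ℝ}

theorem add_const_mem_spectrahedralCone (hC' : ∀ i, (C' i).IsHermitian)
    (hC'sum : ∑ i, C' i = 1) (hε : ∀ i u, |u ⬝ᵥ (C i - C' i) *ᵥ u| ≤ ε * (u ⬝ᵥ u))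
    {x : EuclideanSpace ℝ ι} (hx : x ∈ spectrahedralCone C) {t : ℝ}
    (ht : (∑ i, |x i|) * ε ≤ t) :
    x + WithLp.toLp 2 (fun _ => t) ∈ spectrahedralCone C' := by
  rw [mem_spectrahedralCone_iff hC']
  intro u
  set q : ι → ℝ := fun i => u ⬝ᵥ C i *ᵥ u
  set q' : ι → ℝ := fun i => u ⬝ᵥ C' i *ᵥ u
  have hU : 0 ≤ u ⬝ᵥ u := by simpa using dotProduct_star_self_nonneg u
  have hq'sum : ∑ i, q' i = u ⬝ᵥ u := by
    simpa [hC'sum] using (dotProduct_sum_smul_mulVec C' (fun _ => 1) u).symm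
  have hxq : 0 ≤ ∑ i, x i * q i := by
    simpa [dotProduct_sum_smul_mulVec] using hx.dotProduct_mulVec_nonneg u
  have herr : |∑ i, x i * (q i - q' i)| ≤ (∑ i, |x i|) * ε * (u ⬝ᵥ u) := by
    calc |∑ i, x i * (q i - q' i)| ≤ ∑ i, |x i| * (ε * (u ⬝ᵥ u)) := by
          refine (Finset.abs_sum_le_sum_abs _ _).trans (Finset.sum_le_sum fun i _ => ?_)
          change |x i * (u ⬝ᵥ C i *ᵥ u - u ⬝ᵥ C' i *ᵥ u)| ≤ _
          rw [abs_mul, ← dotProduct_sub, ← sub_mulVec]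
          exact mul_le_mul_of_nonneg_left (hε i u) (abs_nonneg _)
      _ = (∑ i, |x i|) * ε * (u ⬝ᵥ u) := by rw [← Finset.sum_mul, mul_assoc]
  have hexpand : ∑ i, (x i + t) * q' i
      = ∑ i, x i * q i - ∑ i, x i * (q i - q' i) + t * (u ⬝ᵥ u) := by
    simp only [add_mul, Finset.sum_add_distrib, ← hq'sum, Finset.mul_sum, mul_sub,
      Finset.sum_sub_distrib]
    ring
  change 0 ≤ ∑ i, (x i + t) * q' i
  rw [hexpand]
  nlinarith [(abs_le.1 herr).2]

theorem infDist_le_card_mul_of_mem_spectrahedralCone (hC' : ∀ i, (C' i).IsHermitian)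
    (hC'sum : ∑ i, C' i = 1) (hε0 : 0 ≤ ε)
    (hε : ∀ i u, |u ⬝ᵥ (C i - C' i) *ᵥ u| ≤ ε * (u ⬝ᵥ u))
    {x : EuclideanSpace ℝ ι} (hx : x ∈ spectrahedralCone C) {r : ℝ} (hxr : ‖x‖ ≤ r) :
    Metric.infDist x {z | z ∈ spectrahedralCone C' ∧ ‖z‖ ≤ r} ≤ Fintype.card ι * ε * r := by
  have ht : (∑ i, |x i|) * ε ≤ √(Fintype.card ι) * r * ε := by
    gcongr
    exact (EuclideanSpace.sum_abs_le_sqrt_card_mul_norm x).trans (by gcongr)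
  have hr : 0 ≤ r := (norm_nonneg x).trans hxr
  calc Metric.infDist x {z | z ∈ spectrahedralCone C' ∧ ‖z‖ ≤ r}
      ≤ ‖x - (x + WithLp.toLp 2 (fun _ => √(Fintype.card ι) * r * ε))‖ :=
        (convex_spectrahedralCone C').infDist_le_norm_sub
          (isClosed_spectrahedralCone C').isComplete (zero_mem_spectrahedralCone C') hxr
          (add_const_mem_spectrahedralCone hC' hC'sum hε hx ht)
    _ = Fintype.card ι * ε * r := by
        rw [sub_add_cancel_left, norm_neg, EuclideanSpace.norm_toLp_const,
          abs_of_nonneg (by positivity), ← mul_assoc, ← mul_assoc,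
          Real.mul_self_sqrt (Nat.cast_nonneg _)]
        ring

end Perturbation

/-- If `C` and `C'` are normalized spectrahedral representations (each matrix PSD, each
tuple summing to the identity), then the Hausdorff distance between the corresponding
cones intersected with the unit ball is at most `n^{3/2} · maxᵢ ‖Cᵢ - C'ᵢ‖`. -/
theorem hausdorffDist_le_of_normalized_representations (n k : ℕ) (hn : 0 < n)
    (C C' : Fin n → Matrix (Fin k) (Fin k) ℝ)
    (hC : ∀ i, (C i).PosSemidef) (hC' : ∀ i, (C' i).PosSemidef)
    (hCsum : (∑ i, C i) = (1 : Matrix (Fin k) (Fin k) ℝ))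
    (hC'sum : (∑ i, C' i) = (1 : Matrix (Fin k) (Fin k) ℝ)) :
    Metric.hausdorffDist
        {x : EuclideanSpace ℝ (Fin n) | (∑ i, x i • C i).PosSemidef ∧ ‖x‖ ≤ 1}
        {x : EuclideanSpace ℝ (Fin n) | (∑ i, x i • C' i).PosSemidef ∧ ‖x‖ ≤ 1} ≤
      (n : ℝ) ^ ((3 : ℝ) / 2) *
        Finset.univ.sup' (@Finset.univ_nonempty (Fin n) _ ⟨⟨0, hn⟩⟩)
          (fun i => matOpNorm (C i - C' i)) := by
  set ε := Finset.univ.sup' (@Finset.univ_nonempty (Fin n) _ ⟨⟨0, hn⟩⟩)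
    (fun i => matOpNorm (C i - C' i))
  have hCC' (i : Fin n) : matOpNorm (C i - C' i) ≤ ε :=
    Finset.le_sup' (fun i => matOpNorm (C i - C' i)) (Finset.mem_univ i)
  have hε0 : 0 ≤ ε := (norm_nonneg _).trans (hCC' ⟨0, hn⟩)
  have hε (i : Fin n) (u : Fin k → ℝ) : |u ⬝ᵥ (C i - C' i) *ᵥ u| ≤ ε * (u ⬝ᵥ u) :=
    (abs_dotProduct_mulVec_le_matOpNorm _ u).trans <|
      mul_le_mul_of_nonneg_right (hCC' i) (by simpa using dotProduct_star_self_nonneg u)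
  have hε' (i : Fin n) (u : Fin k → ℝ) : |u ⬝ᵥ (C' i - C i) *ᵥ u| ≤ ε * (u ⬝ᵥ u) := by
    rw [← neg_sub, neg_mulVec, dotProduct_neg, abs_neg]
    exact hε i u
  have hn32 : (Fintype.card (Fin n) : ℝ) * ε * 1 ≤ (n : ℝ) ^ ((3 : ℝ) / 2) * ε := by
    rw [Fintype.card_fin, mul_one]
    gcongr
    exact Real.self_le_rpow_of_one_le (by exact_mod_cast hn) (by norm_num)
  refine Metric.hausdorffDist_le_of_infDist (by positivity) (fun x ⟨hx, hxr⟩ => ?_)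
    (fun x ⟨hx, hxr⟩ => ?_)
  · exact (infDist_le_card_mul_of_mem_spectrahedralCone (fun i => (hC' i).isHermitian)
      hC'sum hε0 hε hx hxr).trans hn32
  · exact (infDist_le_card_mul_of_mem_spectrahedralCone (fun i => (hC i).isHermitian)
      hCsum hε0 hε' hx hxr).trans hn32
end
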